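/- arXiv:2511.14568 — 2 statements merged into one kernel-verified Lean document; each statement's English description precedes it below -/
import Mathlib

section
/- Let α > 0 (exponential parameter) and let λ ∈ ℝ, λ ≠ 0. Set L_λ := Σ_{n≥1} (-1)^{n-1}·λ^n·X^n/n ∈ ℝ⟦X⟧ (the formal series of log(1+λX)), e := L_λ·(αλ - L_λ)^{-1} (the series αλ - L_λ has invertible constant coefficient αλ), and ē := (1/λ)·( Exp∘( αλ·X·(1+X)^{-1} ) - 1 ) ∈ ℝ⟦X⟧. Then for all natural numbers n ≥ k: c_n( e^k / k! ) = Σ_{j=k}^{n} binom(j,k)·(j-1)_{j-k}·α^{-j}·λ^{n-j}·S₁(n,j) and c_n( ē^k / k! ) = Σ_{j=k}^{n} binom(n,j)·(-1)^{n-j}·(n-1)_{n-j}·α^j·λ^{j-k}·S₂(j,k). -/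
open PowerSeries Finset

noncomputable section

/-- `cN n F = n! * (coefficient of X^n in F)`. -/
def cN (n : ℕ) (F : PowerSeries ℝ) : ℝ := (n.factorial : ℝ) * PowerSeries.coeff (R := ℝ) n F

/-- Formal substitution `F ∘ G` (faithful when `G` has zero constant coefficient). -/
def pcomp (F G : PowerSeries ℝ) : PowerSeries ℝ :=
  PowerSeries.mk fun n =>
    ∑ k ∈ Finset.range (n + 1), (PowerSeries.coeff (R := ℝ) k F) * (PowerSeries.coeff (R := ℝ) n (G ^ k))

/-- The formal series of log(1+X). -/
def L : PowerSeries ℝ := PowerSeries.mk fun n => if n = 0 then 0 else (-1 : ℝ) ^ (n - 1) / n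

/-- Falling factorial `(y)_m`. -/
def ff (y : ℝ) (m : ℕ) : ℝ := ∏ i ∈ Finset.range m, (y - i)

/-- Rising factorial `⟨y⟩_m`. -/
def rf (y : ℝ) (m : ℕ) : ℝ := ∏ i ∈ Finset.range m, (y + i)

/-- Degenerate falling factorial `(x)_{n,λ}`. -/
def ffl (x : ℝ) (n : ℕ) (lam : ℝ) : ℝ := ∏ i ∈ Finset.range n, (x - i * lam)

/-- Stirling numbers of the second kind. -/
def S2 (n k : ℕ) : ℝ :=
  (k.factorial : ℝ)⁻¹ * ∑ j ∈ Finset.range (k + 1), (-1 : ℝ) ^ (k - j) * (k.choose j) * (j : ℝ) ^ n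

/-- The falling factorial polynomial `x(x-1)⋯(x-n+1)`. -/
def fallingPoly (n : ℕ) : Polynomial ℝ := ∏ i ∈ Finset.range n, (Polynomial.X - Polynomial.C (i : ℝ))

/-- (Signed) Stirling numbers of the first kind. -/
def S1 (n k : ℕ) : ℝ := (fallingPoly n).coeff k

/-- Degenerate Stirling numbers of the second kind. -/
def S2d (lam : ℝ) (n k : ℕ) : ℝ :=
  (k.factorial : ℝ)⁻¹ *
    ∑ j ∈ Finset.range (k + 1), (-1 : ℝ) ^ (k - j) * (k.choose j) * ffl (j : ℝ) n lam

/-- Formal degenerate exponential `e_λ`. -/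
def degExp (lam : ℝ) : PowerSeries ℝ := PowerSeries.mk fun n => ffl 1 n lam / n.factorial

/-- Formal degenerate logarithm `Λ_λ` of `1+X`. -/
def degLog (lam : ℝ) : PowerSeries ℝ :=
  lam⁻¹ • PowerSeries.mk fun n => if n = 0 then 0 else ff lam n / n.factorial

/-- Degenerate Stirling numbers of the first kind. -/
def S1d (lam : ℝ) (n k : ℕ) : ℝ := cN n ((k.factorial : ℝ)⁻¹ • (degLog lam) ^ k)

/-- Binomial series `(1+X)^c`. -/
def binser (c : ℝ) : PowerSeries ℝ := PowerSeries.mk fun n => ff c n / n.factorial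

/-- Frobenius–Euler numbers of order `j`. -/
def FE (u : ℝ) (j n : ℕ) : ℝ :=
  cN n (((1 - u) • (PowerSeries.exp ℝ - PowerSeries.C (R := ℝ) u)⁻¹) ^ j)

/-- The formal series of `log(1+λX)`. -/
def Llam (lam : ℝ) : PowerSeries ℝ :=
  PowerSeries.mk fun n => if n = 0 then 0 else (-1 : ℝ) ^ (n - 1) * lam ^ n / n

/-! Both series are substitutions `F ∘ G` with `G(0) = 0`, and then
`[X^n] (F ∘ G)^k = ∑_{k ≤ j ≤ n} [X^j] F^k · [X^n] G^j`.
For `e` take `F = X/(1-X)` and `G = L_λ/(αλ)`: here `[X^j] (X/(1-X))^k = binom(j-1, j-k)`, and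
`c_n(log(1+X)^j) = j!·S₁(n,j)` because both sides obey the recursion coming from
`(1+X)·log'(1+X) = 1`. For `ē` take `F = Exp - 1` and `G = αλX/(1+X)`: the binomial theorem
gives `c_j((Exp-1)^k) = k!·S₂(j,k)`, and `[X^n] (X/(1+X))^j = (-1)^(n-j)·binom(n-1, n-j)`.
The falling factorials enter through `(m-1)_r = r!·binom(m-1, r)`. -/

namespace PowerSeries

section CommRing

variable {R : Type*} [CommRing R]

theorem coeff_pow_eq_zero_of_lt {F : R⟦X⟧} (hF : constantCoeff F = 0) {n j : ℕ} (h : n < j) :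
    coeff n (F ^ j) = 0 :=
  coeff_of_lt_order n ((Nat.cast_lt.mpr h).trans_le (le_order_pow_of_constantCoeff_eq_zero j hF))

theorem coeff_subst_eq_sum_range {G : R⟦X⟧} (hG : constantCoeff G = 0) (F : R⟦X⟧)
    (n : ℕ) :
    coeff n (F.subst G) = ∑ d ∈ range (n + 1), coeff d F * coeff n (G ^ d) := by
  rw [coeff_subst' (.of_constantCoeff_zero' hG)]
  refine finsum_eq_sum_of_support_subset _ fun d hd => ?_
  rw [Function.mem_support] at hd
  rw [coe_range, Set.mem_Iio, Nat.lt_succ_iff]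
  by_contra! hnd
  exact hd (by rw [coeff_pow_eq_zero_of_lt hG hnd, smul_zero])

theorem coeff_subst_pow {F G : R⟦X⟧} (hF : constantCoeff F = 0) (hG : constantCoeff G = 0)
    (k n : ℕ) :
    coeff n (F.subst G ^ k) = ∑ j ∈ Icc k n, coeff j (F ^ k) * coeff n (G ^ j) := by
  rw [← subst_pow (.of_constantCoeff_zero' hG), coeff_subst_eq_sum_range hG]
  refine (sum_subset (fun j hj => ?_) fun j hjn hj => ?_).symm
  · simp only [mem_Icc, mem_range] at hj ⊢; omega
  · simp only [mem_Icc, mem_range] at hjn hj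
    rw [coeff_pow_eq_zero_of_lt hF (by omega), zero_mul]

end CommRing

section Field

variable {K : Type*} [Field K]

theorem inv_one_sub_C_mul_X_pow (b : K) (j : ℕ) :
    (1 - C b * X)⁻¹ ^ j = rescale b (invOneSubPow K j).val := by
  have hinv : (1 - C b * X)⁻¹ = rescale b (mk 1) := by
    rw [inv_eq_iff_mul_eq_one (by simp), ← rescale_X, ← map_one (rescale b), ← map_sub,
      ← map_mul, mk_one_mul_one_sub_eq_one]
  rw [hinv, ← map_pow, invOneSubPow_eq_inv_one_sub_pow, Units.val_pow_eq_pow_val]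
  rfl

theorem coeff_inv_one_sub_C_mul_X_pow (b : K) (j m : ℕ) :
    coeff m ((1 - C b * X)⁻¹ ^ j) = b ^ m * (m + j - 1).choose m := by
  rw [inv_one_sub_C_mul_X_pow, coeff_rescale]
  rcases j with _ | d
  · rcases m with _ | m <;> simp [invOneSubPow_zero]
  · rw [invOneSubPow_val_succ_eq_mk_add_choose, coeff_mk, show m + (d + 1) - 1 = m + d by omega,
      Nat.choose_symm_add, add_comm]

theorem coeff_X_mul_inv_one_sub_C_mul_X_pow (b : K) {j n : ℕ} (h : j ≤ n) :
    coeff n ((X * (1 - C b * X)⁻¹) ^ j) = b ^ (n - j) * (n - 1).choose (n - j) := by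
  rw [mul_pow, coeff_X_pow_mul', if_pos h, coeff_inv_one_sub_C_mul_X_pow,
    Nat.sub_add_cancel h]

theorem mul_inv_eq_subst_X_mul_inv_one_sub {G : K⟦X⟧} (hG : constantCoeff G = 0) {c : K}
    (hc : c ≠ 0) :
    G * (C c - G)⁻¹ = (X * (1 - X : K⟦X⟧)⁻¹).subst (c⁻¹ • G) := by
  have hu : HasSubst (c⁻¹ • G) := .of_constantCoeff_zero' (by simp [hG])
  have hgeom : X * (1 - X : K⟦X⟧)⁻¹ * (1 - X) = X := by
    rw [mul_assoc, PowerSeries.inv_mul_cancel _ (by simp), mul_one]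
  have hsub := congrArg (subst (c⁻¹ • G)) hgeom
  rw [subst_mul hu, subst_sub hu, subst_X hu, ← coe_substAlgHom hu, map_one,
    coe_substAlgHom] at hsub
  rw [eq_comm, eq_mul_inv_iff_mul_eq (by simp [hG, hc])]
  calc _ = (X * (1 - X : K⟦X⟧)⁻¹).subst (c⁻¹ • G) * (c • (1 - c⁻¹ • G)) := by
        congr 1
        rw [smul_sub, smul_smul, mul_inv_cancel₀ hc, one_smul, smul_eq_C_mul, mul_one]
    _ = G := by rw [mul_smul_comm, hsub, smul_smul, mul_inv_cancel₀ hc, one_smul]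

end Field

end PowerSeries

theorem pcomp_eq_subst (F : ℝ⟦X⟧) {G : ℝ⟦X⟧} (hG : constantCoeff G = 0) :
    pcomp F G = F.subst G := by
  ext n
  rw [pcomp, coeff_mk, coeff_subst_eq_sum_range hG]

theorem cast_choose_mul_factorial_mul_factorial {R : Type*} [CommSemiring R] {n k : ℕ}
    (h : k ≤ n) : (n.choose k : R) * k.factorial * (n - k).factorial = n.factorial := by
  rw [← Nat.cast_mul, ← Nat.cast_mul, Nat.choose_mul_factorial_mul_factorial h]

theorem ff_natCast (N m : ℕ) : ff N m = N.descFactorial m := by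
  induction m with
  | zero => simp [ff]
  | succ m ih =>
    rw [ff, prod_range_succ, ← ff, ih, Nat.descFactorial_succ, mul_comm]
    rcases le_or_gt m N with h | h
    · push_cast [h]; ring
    · simp [Nat.descFactorial_eq_zero_iff_lt.mpr h]

theorem ff_natCast_sub_one {j m : ℕ} (h : m ≤ j) :
    ff ((j : ℝ) - 1) m = m.factorial * (j - 1).choose m := by
  rcases j with _ | j
  · obtain rfl : m = 0 := by omega
    simp [ff]
  · rw [Nat.cast_succ, add_sub_cancel_right, ff_natCast,
      Nat.descFactorial_eq_factorial_mul_choose, Nat.add_sub_cancel]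
    push_cast; ring

theorem coeff_exp_pow (i j : ℕ) : coeff j (exp ℝ ^ i) = (i : ℝ) ^ j / j.factorial := by
  rw [exp_pow_eq_rescale_exp, coeff_rescale, coeff_exp, map_div₀, map_one, map_natCast,
    mul_one_div]

theorem cN_exp_sub_one_pow (j k : ℕ) : cN j ((exp ℝ - 1) ^ k) = k.factorial * S2 j k := by
  have hj : (j.factorial : ℝ) ≠ 0 := by positivity
  have hk : (k.factorial : ℝ) ≠ 0 := by positivity
  rw [cN, sub_pow, map_sum, S2, mul_inv_cancel_left₀ hk, mul_sum]
  refine sum_congr rfl fun i hi => ?_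
  have hterm : (-1 : ℝ⟦X⟧) ^ (i + k) * exp ℝ ^ i * 1 ^ (k - i) * (k.choose i : ℝ⟦X⟧)
      = C ((-1 : ℝ) ^ (k - i) * k.choose i) * exp ℝ ^ i := by
    rw [show i + k = (k - i) + 2 * i by have := mem_range.mp hi; omega]
    simp only [map_mul, map_pow, map_neg, map_one, map_natCast, one_pow, mul_one, pow_add,
      pow_mul, neg_one_sq]
    ring
  rw [hterm, coeff_C_mul, coeff_exp_pow]
  field_simp

theorem one_add_X_mul_derivative_L : (1 + X) * d⁄dX ℝ L = 1 := by
  ext m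
  rcases m with _ | m
  · rw [add_mul, one_mul, map_add, coeff_zero_X_mul, coeff_derivative, L, coeff_mk]
    simp
  · rw [add_mul, one_mul, map_add, coeff_succ_X_mul, coeff_derivative, coeff_derivative, L,
      coeff_mk, coeff_mk]
    simp only [Nat.add_one_ne_zero, if_false, Nat.add_sub_cancel, coeff_one]
    push_cast
    field_simp
    ring

theorem coeff_L_pow_succ_succ (n j : ℕ) :
    (n + 1) * coeff (n + 1) (L ^ (j + 1)) + n * coeff n (L ^ (j + 1))
      = (j + 1) * coeff n (L ^ j) := by
  have hD : (1 + X) * d⁄dX ℝ (L ^ (j + 1)) = C ((j : ℝ) + 1) * L ^ j := by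
    rw [derivative_pow, Nat.add_sub_cancel, mul_comm, mul_assoc, mul_comm (d⁄dX ℝ L),
      one_add_X_mul_derivative_L, mul_one, ← map_natCast C, Nat.cast_succ, map_add, map_one]
  have hc := congrArg (coeff n) hD
  rw [add_mul, one_mul, map_add, coeff_C_mul, coeff_derivative] at hc
  rcases n with _ | n
  · simpa [coeff_derivative] using hc
  · rw [coeff_succ_X_mul, coeff_derivative] at hc
    push_cast at hc ⊢
    linarith

theorem S1_zero_left (j : ℕ) : S1 0 j = if j = 0 then 1 else 0 := by
  simp [S1, fallingPoly, Polynomial.coeff_one]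

theorem S1_succ_zero (n : ℕ) : S1 (n + 1) 0 = 0 := by
  rw [S1, Polynomial.coeff_zero_eq_eval_zero, fallingPoly, Polynomial.eval_prod]
  exact prod_eq_zero (mem_range.mpr n.succ_pos) (by simp)

theorem S1_succ_succ (n j : ℕ) : S1 (n + 1) (j + 1) = S1 n j - n * S1 n (j + 1) := by
  rw [S1, S1, S1, fallingPoly, prod_range_succ, ← fallingPoly, mul_sub, Polynomial.coeff_sub,
    Polynomial.coeff_mul_X, Polynomial.coeff_mul_C]
  ring

theorem cN_L_pow (n j : ℕ) : cN n (L ^ j) = j.factorial * S1 n j := by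
  induction n generalizing j with
  | zero =>
    rcases j with _ | j
    · simp [cN, S1_zero_left]
    · simp [cN, S1_zero_left, pow_succ, L]
  | succ n ih =>
    rcases j with _ | j
    · simp [cN, S1_succ_zero, coeff_one]
    · have h1 := ih j
      have h2 := ih (j + 1)
      simp only [cN, Nat.factorial_succ, Nat.cast_mul, Nat.cast_succ, S1_succ_succ] at *
      linear_combination (n.factorial : ℝ) * coeff_L_pow_succ_succ n j + ((j : ℝ) + 1) * h1
        - (n : ℝ) * h2

theorem Llam_eq_rescale (lam : ℝ) : Llam lam = rescale lam L := by
  ext m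
  rw [coeff_rescale, Llam, L, coeff_mk, coeff_mk]
  split_ifs <;> ring

theorem constantCoeff_Llam (lam : ℝ) : constantCoeff (Llam lam) = 0 := by
  simp [Llam]

theorem cN_Llam_pow (lam : ℝ) (n j : ℕ) :
    cN n (Llam lam ^ j) = lam ^ n * j.factorial * S1 n j := by
  rw [cN, Llam_eq_rescale, ← map_pow, coeff_rescale, mul_left_comm, ← cN, cN_L_pow, mul_assoc]

theorem cN_Llam_mul_inv_pow (α lam : ℝ) (hα : α ≠ 0) (hlam : lam ≠ 0) (n k : ℕ) :
    cN n ((k.factorial : ℝ)⁻¹ • (Llam lam * (C (α * lam) - Llam lam)⁻¹) ^ k)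
      = ∑ j ∈ Icc k n,
          (j.choose k : ℝ) * ff ((j : ℝ) - 1) (j - k) * α⁻¹ ^ j * lam ^ (n - j) * S1 n j := by
  have hF : constantCoeff (X * (1 - X : ℝ⟦X⟧)⁻¹) = 0 := by simp
  have hG : constantCoeff ((α * lam)⁻¹ • Llam lam) = 0 := by simp [constantCoeff_Llam]
  rw [mul_inv_eq_subst_X_mul_inv_one_sub (constantCoeff_Llam lam) (mul_ne_zero hα hlam), cN,
    map_smul, coeff_subst_pow hF hG, smul_sum, mul_sum]
  refine sum_congr rfl fun j hj => ?_
  obtain ⟨hkj, hjn⟩ := mem_Icc.mp hj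
  have hgeom : coeff j ((X * (1 - X : ℝ⟦X⟧)⁻¹) ^ k) = ((j - 1).choose (j - k) : ℝ) := by
    simpa using coeff_X_mul_inv_one_sub_C_mul_X_pow (1 : ℝ) hkj
  have hLlam : n.factorial * coeff n (Llam lam ^ j)
      = lam ^ j * lam ^ (n - j) * ((j.choose k : ℝ) * k.factorial * (j - k).factorial)
          * S1 n j := by
    rw [← cN, cN_Llam_pow, cast_choose_mul_factorial_mul_factorial hkj, pow_mul_pow_sub lam hjn]
  rw [hgeom, smul_pow, coeff_smul, ff_natCast_sub_one (Nat.sub_le j k), smul_eq_mul, smul_eq_mul]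
  have hk : (k.factorial : ℝ) ≠ 0 := by positivity
  calc _ = ((j - 1).choose (j - k) : ℝ) * (α * lam)⁻¹ ^ j / k.factorial
        * (n.factorial * coeff n (Llam lam ^ j)) := by ring
    _ = _ := by rw [hLlam, mul_inv, mul_pow, inv_pow lam]; field_simp

theorem cN_pcomp_exp_sub_one_pow (α lam : ℝ) (hlam : lam ≠ 0) (n k : ℕ) :
    cN n ((k.factorial : ℝ)⁻¹ •
        (lam⁻¹ • (pcomp (exp ℝ) ((α * lam) • (X * (1 + X)⁻¹)) - 1)) ^ k)
      = ∑ j ∈ Icc k n,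
          (n.choose j : ℝ) * (-1) ^ (n - j) * ff ((n : ℝ) - 1) (n - j) * α ^ j * lam ^ (j - k)
            * S2 j k := by
  set G : ℝ⟦X⟧ := (α * lam) • (X * (1 - C (-1) * X)⁻¹)
  have hG : constantCoeff G = 0 := by simp [G]
  have hE : constantCoeff (exp ℝ - 1) = 0 := by simp
  have hsub : pcomp (exp ℝ) G - 1 = (exp ℝ - 1).subst G := by
    rw [pcomp_eq_subst _ hG, ← coe_substAlgHom (.of_constantCoeff_zero' hG), map_sub, map_one]
  rw [show (1 + X : ℝ⟦X⟧) = 1 - C (-1) * X by simp [sub_eq_add_neg], hsub, smul_pow, cN,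
    map_smul, map_smul, coeff_subst_pow hE hG, smul_sum, smul_sum, mul_sum]
  refine sum_congr rfl fun j hj => ?_
  obtain ⟨hkj, hjn⟩ := mem_Icc.mp hj
  have hS2 := cN_exp_sub_one_pow j k
  rw [cN] at hS2
  have hGj : coeff n (G ^ j) = (α * lam) ^ j * ((-1) ^ (n - j) * (n - 1).choose (n - j)) := by
    rw [smul_pow, coeff_smul, coeff_X_mul_inv_one_sub_C_mul_X_pow _ hjn, smul_eq_mul]
  rw [hGj, ff_natCast_sub_one (Nat.sub_le n j), ← cast_choose_mul_factorial_mul_factorial hjn]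
  have hk : (k.factorial : ℝ) ≠ 0 := by positivity
  calc _ = (n.choose j : ℝ) * (n - j).factorial * (-1) ^ (n - j) * (n - 1).choose (n - j) * α ^ j
        * (lam ^ j * lam⁻¹ ^ k) / k.factorial * (j.factorial * coeff j ((exp ℝ - 1) ^ k)) := by
        simp only [smul_eq_mul]; ring
    _ = _ := by rw [hS2, ← pow_mul_pow_sub lam hkj, inv_pow]; field_simp

theorem stmt11_general (α lam : ℝ) (hα : 0 < α) (hlam : lam ≠ 0) (n k : ℕ) :
    cN n ((k.factorial : ℝ)⁻¹ •
        (Llam lam * (PowerSeries.C (R := ℝ) (α * lam) - Llam lam)⁻¹) ^ k)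
        = ∑ j ∈ Finset.Icc k n,
            (j.choose k : ℝ) * ff ((j : ℝ) - 1) (j - k) * α⁻¹ ^ j * lam ^ (n - j) * S1 n j ∧
    cN n ((k.factorial : ℝ)⁻¹ •
        (lam⁻¹ • (pcomp (PowerSeries.exp ℝ)
          ((α * lam) • (PowerSeries.X * (1 + PowerSeries.X)⁻¹)) - 1)) ^ k)
        = ∑ j ∈ Finset.Icc k n,
            (n.choose j : ℝ) * (-1 : ℝ) ^ (n - j) * ff ((n : ℝ) - 1) (n - j) * α ^ j *
              lam ^ (j - k) * S2 j k :=
  ⟨cN_Llam_mul_inv_pow α lam hα.ne' hlam n k, cN_pcomp_exp_sub_one_pow α lam hlam n k⟩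

theorem stmt11 (α lam : ℝ) (hα : 0 < α) (hlam : lam ≠ 0) (n k : ℕ) (hkn : k ≤ n) :
    cN n ((k.factorial : ℝ)⁻¹ •
        (Llam lam * (PowerSeries.C (R := ℝ) (α * lam) - Llam lam)⁻¹) ^ k)
        = ∑ j ∈ Finset.Icc k n,
            (j.choose k : ℝ) * ff ((j : ℝ) - 1) (j - k) * α⁻¹ ^ j * lam ^ (n - j) * S1 n j ∧
    cN n ((k.factorial : ℝ)⁻¹ •
        (lam⁻¹ • (pcomp (PowerSeries.exp ℝ)
          ((α * lam) • (PowerSeries.X * (1 + PowerSeries.X)⁻¹)) - 1)) ^ k)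
        = ∑ j ∈ Finset.Icc k n,
            (n.choose j : ℝ) * (-1 : ℝ) ^ (n - j) * ff ((n : ℝ) - 1) (n - j) * α ^ j *
              lam ^ (j - k) * S2 j k :=
  stmt11_general α lam hα hlam n k
end
end

section
/- Let α, β > 0 (gamma parameters). Set G := Σ_{n≥0} ⟨α⟩_n·β^{-n}·X^n/n! ∈ ℝ⟦X⟧, where ⟨α⟩_n := α(α+1)⋯(α+n-1) is the rising factorial with ⟨α⟩_0 := 1 (G is the binomial series of (1-X/β)^{-α}). Then for all natural numbers n ≥ k: c_n( (G-1)^k / k! ) = (1/(k!·β^n))·Σ_{j=0}^{k} binom(k,j)·(-1)^{k-j}·(αj+n-1)_n, where (αj+n-1)_n is the falling factorial of the real number αj+n-1 of length n. -/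
open PowerSeries Finset

noncomputable section

/-!
`G` is the series of `(1 - X/β)^(-α)`, so `G^j` is that of `(1 - X/β)^(-jα)`: in terms of
coefficients this is the Chu–Vandermonde identity for rising factorials. Expanding
`(G - 1)^k` binomially then gives `c_n((G - 1)^k) = β^(-n) Σ_j binom(k,j) (-1)^(k-j) ⟨jα⟩_n`,
and `⟨y⟩_n = (y + n - 1)_n`.
-/

theorem ff_eq_smeval_descPochhammer (y : ℝ) (m : ℕ) : ff y m = (descPochhammer ℤ m).smeval y := by
  induction m with
  | zero => simp [ff]
  | succ m ih =>
    rw [descPochhammer_succ_right, Polynomial.smeval_mul, ← ih, ff, prod_range_succ, ← ff]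
    simp [Polynomial.smeval_sub, Polynomial.smeval_X, Polynomial.smeval_natCast]

theorem ff_add (x y : ℝ) (n : ℕ) :
    ff (x + y) n = ∑ ij ∈ antidiagonal n, (n.choose ij.1 : ℝ) * (ff x ij.1 * ff y ij.2) := by
  simp only [ff_eq_smeval_descPochhammer]
  exact Ring.descPochhammer_smeval_add n (Commute.all x y)

theorem rf_eq_neg_one_pow_mul_ff_neg (y : ℝ) (m : ℕ) : rf y m = (-1) ^ m * ff (-y) m := by
  rw [rf, ff, ← card_range m, ← prod_const, card_range, ← prod_mul_distrib]
  exact prod_congr rfl fun i _ => by ring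

theorem rf_add (x y : ℝ) (n : ℕ) :
    rf (x + y) n = ∑ ij ∈ antidiagonal n, (n.choose ij.1 : ℝ) * (rf x ij.1 * rf y ij.2) := by
  rw [rf_eq_neg_one_pow_mul_ff_neg, neg_add, ff_add, mul_sum]
  refine sum_congr rfl fun ij hij => ?_
  rw [rf_eq_neg_one_pow_mul_ff_neg, rf_eq_neg_one_pow_mul_ff_neg, ← mem_antidiagonal.mp hij,
    pow_add]
  ring

theorem ff_add_sub_one (y : ℝ) (n : ℕ) : ff (y + n - 1) n = rf y n := by
  rw [ff, rf, ← prod_range_reflect]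
  refine prod_congr rfl fun i hi => ?_
  have hi : i + 1 ≤ n := mem_range.mp hi
  rw [Nat.sub_sub, add_comm 1 i, Nat.cast_sub hi]
  push_cast
  ring

/-- The power series of `(1 - b X)^(-c)`. -/
def risingSeries (b c : ℝ) : PowerSeries ℝ := mk fun m => rf c m * b ^ m / m.factorial

theorem coeff_risingSeries (b c : ℝ) (m : ℕ) :
    coeff m (risingSeries b c) = rf c m * b ^ m / m.factorial :=
  coeff_mk _ _

theorem risingSeries_add (b c d : ℝ) :
    risingSeries b (c + d) = risingSeries b c * risingSeries b d := by
  ext n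
  rw [coeff_mul, coeff_risingSeries, rf_add, sum_mul, sum_div]
  refine sum_congr rfl fun ⟨p, q⟩ hpq => ?_
  obtain rfl : p + q = n := mem_antidiagonal.mp hpq
  rw [coeff_risingSeries, coeff_risingSeries, Nat.cast_choose ℝ (Nat.le_add_right p q),
    Nat.add_sub_cancel_left, pow_add]
  field_simp

theorem risingSeries_zero (b : ℝ) : risingSeries b 0 = 1 := by
  ext m
  rw [coeff_risingSeries, coeff_one]
  cases m with
  | zero => simp [rf]
  | succ m => simp [rf, prod_range_succ']

theorem risingSeries_pow (b c : ℝ) (j : ℕ) : risingSeries b c ^ j = risingSeries b (j * c) := by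
  induction j with
  | zero => simp [risingSeries_zero]
  | succ j ih => rw [pow_succ, ih, ← risingSeries_add, Nat.cast_succ, add_one_mul]

theorem coeff_sub_one_pow {R : Type*} [CommRing R] (F : PowerSeries R) (k n : ℕ) :
    coeff n ((F - 1) ^ k) =
      ∑ j ∈ range (k + 1), (k.choose j : R) * (-1) ^ (k - j) * coeff n (F ^ j) := by
  rw [sub_eq_add_neg, add_pow, map_sum]
  refine sum_congr rfl fun j _ => ?_
  rw [mul_assoc, show (-1 : PowerSeries R) ^ (k - j) * (k.choose j : PowerSeries R)
      = C ((-1) ^ (k - j) * (k.choose j : R)) by simp, coeff_mul_C]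
  ring

theorem stmt12_general (α β : ℝ) (n k : ℕ) :
    cN n ((k.factorial : ℝ)⁻¹ •
        ((PowerSeries.mk fun m => rf α m * β⁻¹ ^ m / m.factorial) - 1) ^ k)
      = 1 / ((k.factorial : ℝ) * β ^ n) *
          ∑ j ∈ Finset.range (k + 1),
            (k.choose j : ℝ) * (-1) ^ (k - j) * ff (α * j + n - 1) n := by
  change cN n ((k.factorial : ℝ)⁻¹ • (risingSeries β⁻¹ α - 1) ^ k) = _
  rw [cN, coeff_smul, coeff_sub_one_pow, smul_eq_mul, mul_sum, mul_sum, mul_sum]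
  refine sum_congr rfl fun j _ => ?_
  rw [risingSeries_pow, coeff_risingSeries, mul_comm α, ff_add_sub_one, inv_pow]
  field_simp

theorem stmt12 (α β : ℝ) (hα : 0 < α) (hβ : 0 < β) (n k : ℕ) (hkn : k ≤ n) :
    cN n ((k.factorial : ℝ)⁻¹ •
        ((PowerSeries.mk fun m => rf α m * β⁻¹ ^ m / m.factorial) - 1) ^ k)
      = 1 / ((k.factorial : ℝ) * β ^ n) *
          ∑ j ∈ Finset.range (k + 1),
            (k.choose j : ℝ) * (-1) ^ (k - j) * ff (α * j + n - 1) n :=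
  stmt12_general α β n k
end
end
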